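/- Let L > 0 and t ≥ 0. If t ≤ 2L then ∫_{−2}^{2} max( L·√(4−u²)/(2π) − t/(2π), 0 ) du = (2L/π)·arcsin(√(4L²−t²)/(2L)) − (t/(2πL))·√(4L²−t²), and if t ≥ 2L then ∫_{−2}^{2} max( L·√(4−u²)/(2π) − t/(2π), 0 ) du = 0. -/

import Mathlib

open MeasureTheory Real intervalIntegral

/-!
Write `f u = (L √(4 - u²) - t) / (2π)`. For `t ≤ 2L` the level `a = √(4L² - t²) / L ∈ [0, 2]`
satisfies `L √(4 - a²) = t`, so `f ≥ 0` exactly on `[-a, a]` and the positive part of `f`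
integrates to `∫_{-a}^{a} f`, which the antiderivative `(u √(r² - u²) + r² arcsin (u / r)) / 2`
of the semicircle `√(r² - u²)` evaluates. For `t ≥ 2L` we have `f ≤ 0` on `[-2, 2]`.
-/

theorem integral_max_zero_eq_of_sign {f : ℝ → ℝ} {a b c d : ℝ} (hac : a ≤ c) (hcd : c ≤ d)
    (hdb : d ≤ b) (hf : IntervalIntegrable f volume a b) (hleft : ∀ u ∈ Set.Icc a c, f u ≤ 0)
    (hmid : ∀ u ∈ Set.Icc c d, 0 ≤ f u) (hright : ∀ u ∈ Set.Icc d b, f u ≤ 0) :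
    ∫ u in a..b, max (f u) 0 = ∫ u in c..d, f u := by
  have hint {x y : ℝ} (hx : x ∈ Set.Icc a b) (hy : y ∈ Set.Icc a b) :
      IntervalIntegrable (fun u => max (f u) 0) volume x y :=
    IntervalIntegrable.mono_set ⟨hf.1.pos_part, hf.2.pos_part⟩
      (Set.uIcc_subset_uIcc (Set.Icc_subset_uIcc hx) (Set.Icc_subset_uIcc hy))
  have hzero_left : ∫ u in a..c, max (f u) 0 = 0 := by
    rw [integral_congr fun u hu => max_eq_right (hleft u (Set.uIcc_of_le hac ▸ hu)),
      intervalIntegral.integral_zero]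
  have hzero_right : ∫ u in d..b, max (f u) 0 = 0 := by
    rw [integral_congr fun u hu => max_eq_right (hright u (Set.uIcc_of_le hdb ▸ hu)),
      intervalIntegral.integral_zero]
  rw [← integral_add_adjacent_intervals (hint ⟨le_rfl, by linarith⟩ ⟨hac, by linarith⟩)
      (hint ⟨hac, by linarith⟩ ⟨by linarith, le_rfl⟩),
    ← integral_add_adjacent_intervals (hint ⟨hac, by linarith⟩ ⟨by linarith, hdb⟩)
      (hint ⟨by linarith, hdb⟩ ⟨by linarith, le_rfl⟩),
    hzero_left, hzero_right, zero_add, add_zero]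
  exact integral_congr fun u hu => max_eq_left (hmid u (Set.uIcc_of_le hcd ▸ hu))

theorem hasDerivAt_semicircle_antideriv {r x : ℝ} (hx : x ∈ Set.Ioo (-r) r) :
    HasDerivAt (fun y => (y * √(r ^ 2 - y ^ 2) + r ^ 2 * arcsin (y / r)) / 2)
      (√(r ^ 2 - x ^ 2)) x := by
  obtain ⟨hlo, hhi⟩ := hx
  have hr : 0 < r := by linarith
  have hS : 0 < r ^ 2 - x ^ 2 := by nlinarith
  have hsqrt : HasDerivAt (fun y => √(r ^ 2 - y ^ 2)) (-x / √(r ^ 2 - x ^ 2)) x := by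
    have := ((hasDerivAt_pow 2 x).const_sub (r ^ 2)).sqrt hS.ne'
    convert this using 1
    field_simp
    ring
  have harcsin : HasDerivAt (fun y => arcsin (y / r)) (1 / √(1 - (x / r) ^ 2) * (1 / r)) x :=
    (hasDerivAt_arcsin (by rw [ne_eq, div_eq_iff hr.ne']; linarith)
      (by rw [ne_eq, div_eq_iff hr.ne']; linarith)).comp x ((hasDerivAt_id x).div_const r)
  have hrescale : √(1 - (x / r) ^ 2) = √(r ^ 2 - x ^ 2) / r := by
    rw [← sqrt_sq hr.le, ← sqrt_div' _ (sq_nonneg r), sqrt_sq hr.le]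
    congr 1
    field_simp
  refine ((((hasDerivAt_id' x).mul hsqrt).add (harcsin.const_mul (r ^ 2))).div_const 2).congr_deriv
    ?_
  rw [hrescale]
  have hsq := sq_sqrt hS.le
  have hne : √(r ^ 2 - x ^ 2) ≠ 0 := (sqrt_pos.mpr hS).ne'
  field_simp
  rw [hsq]
  ring

theorem integral_sqrt_sq_sub_sq {r a : ℝ} (ha : 0 ≤ a) (har : a ≤ r) :
    ∫ u in -a..a, √(r ^ 2 - u ^ 2) = a * √(r ^ 2 - a ^ 2) + r ^ 2 * arcsin (a / r) := by
  rw [integral_eq_sub_of_hasDeriv_right_of_le (by linarith) (by fun_prop)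
    (fun x hx => (hasDerivAt_semicircle_antideriv
      ⟨by linarith [hx.1], by linarith [hx.2]⟩).hasDerivWithinAt)
    ((by fun_prop : Continuous fun u : ℝ => √(r ^ 2 - u ^ 2)).intervalIntegrable _ _)]
  simp only [neg_sq, neg_div, arcsin_neg]
  ring

theorem sqrt_four_mul_sq_sub_sq_div_le {L : ℝ} (hL : 0 < L) (t : ℝ) :
    √(4 * L ^ 2 - t ^ 2) / L ≤ 2 := by
  rw [div_le_iff₀ hL, sqrt_le_iff]
  exact ⟨by positivity, by nlinarith⟩

theorem sqrt_four_sub_sq_eq_of_le {L t : ℝ} (hL : 0 < L) (ht : 0 ≤ t) (htL : t ≤ 2 * L) :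
    √(4 - (√(4 * L ^ 2 - t ^ 2) / L) ^ 2) = t / L := by
  rw [div_pow, sq_sqrt (by nlinarith), ← sqrt_sq (div_nonneg ht hL.le)]
  congr 1
  field_simp
  ring

theorem mul_sqrt_four_sub_sq_sign {L t u : ℝ} (hL : 0 < L) (ht : 0 ≤ t) (htL : t ≤ 2 * L) :
    (u ^ 2 ≤ (√(4 * L ^ 2 - t ^ 2) / L) ^ 2 → t ≤ L * √(4 - u ^ 2)) ∧
      ((√(4 * L ^ 2 - t ^ 2) / L) ^ 2 ≤ u ^ 2 → L * √(4 - u ^ 2) ≤ t) := by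
  have ht_eq : t = L * √(4 - (√(4 * L ^ 2 - t ^ 2) / L) ^ 2) := by
    rw [sqrt_four_sub_sq_eq_of_le hL ht htL]
    field_simp
  exact ⟨fun hu => ht_eq ▸ by gcongr, fun hu => ht_eq ▸ by gcongr⟩

theorem gue_refined_form_factor_integral (L t : ℝ) (hL : 0 < L) (ht : 0 ≤ t) :
    (t ≤ 2 * L →
      (∫ u in (-2:ℝ)..2,
          max (L * Real.sqrt (4 - u^2) / (2 * Real.pi) - t / (2 * Real.pi)) 0)
        = (2 * L / Real.pi) * Real.arcsin (Real.sqrt (4 * L^2 - t^2) / (2 * L))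
            - (t / (2 * Real.pi * L)) * Real.sqrt (4 * L^2 - t^2)) ∧
    (2 * L ≤ t →
      (∫ u in (-2:ℝ)..2,
          max (L * Real.sqrt (4 - u^2) / (2 * Real.pi) - t / (2 * Real.pi)) 0) = 0) := by
  refine ⟨fun htL => ?_, fun htL => ?_⟩
  · have hsign := fun u => mul_sqrt_four_sub_sq_sign (u := u) hL ht htL
    have hsemicircle := integral_sqrt_sq_sub_sq (r := 2) (by positivity)
      (sqrt_four_mul_sq_sub_sq_div_le hL t)
    rw [show (2 : ℝ) ^ 2 = 4 by norm_num, sqrt_four_sub_sq_eq_of_le hL ht htL] at hsemicircle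
    set a := √(4 * L ^ 2 - t ^ 2) / L with ha
    have ha0 : 0 ≤ a := by positivity
    have ha2 : a ≤ 2 := sqrt_four_mul_sq_sub_sq_div_le hL t
    have hmain : Continuous fun u => L * √(4 - u ^ 2) / (2 * π) := by fun_prop
    have hf : Continuous fun u => L * √(4 - u ^ 2) / (2 * π) - t / (2 * π) :=
      hmain.sub continuous_const
    rw [integral_max_zero_eq_of_sign (c := -a) (d := a) (by linarith) (by linarith) ha2
        (hf.intervalIntegrable _ _)
        (fun u hu => sub_nonpos.2 (by gcongr; exact (hsign u).2 (by nlinarith [hu.1, hu.2])))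
        (fun u hu => sub_nonneg.2 (by gcongr; exact (hsign u).1 (by nlinarith [hu.1, hu.2])))
        (fun u hu => sub_nonpos.2 (by gcongr; exact (hsign u).2 (by nlinarith [hu.1, hu.2]))),
      integral_sub (hmain.intervalIntegrable _ _) intervalIntegrable_const,
      intervalIntegral.integral_div, intervalIntegral.integral_const_mul, hsemicircle,
      intervalIntegral.integral_const, smul_eq_mul, ha, div_div]
    field_simp
    ring
  · have hsqrt_le (u : ℝ) : √(4 - u ^ 2) ≤ 2 := sqrt_le_iff.2 ⟨zero_le_two, by nlinarith⟩
    rw [integral_congr fun u _ => max_eq_right (sub_nonpos.2 (by gcongr; nlinarith [hsqrt_le u])),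
      intervalIntegral.integral_zero]
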